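/- arXiv:1706.02734 — 5 statements merged into one kernel-verified Lean document; each statement's English description precedes it below -/
import Mathlib

section
/- Let m ≥ 1 and let u : ℝ³ → ℝ^m be a C¹ map satisfying the inner variation identity on B₆₄(0). Then for every x ∈ ℝ³ and r > 0 with the closed ball B̄_r(x) contained in B₆₄(0), one has D_φ(x,r) = (1/r) ∫_{ℝ³} (∂_{ν_x} u(y) · u(y)) ψ(|x − y|/r) dy. -/
open MeasureTheory Metric

noncomputable section

/-- `ℝ³` as a Euclidean space. -/
abbrev E3 : Type := EuclideanSpace ℝ (Fin 3)

/-- The cutoff function `φ`: `1` on `[0,1/2]`, `2 - 2t` on `[1/2,1]`, `0` on `[1,∞)`. -/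
def phi (t : ℝ) : ℝ := if t ≤ 1/2 then 1 else if t ≤ 1 then 2 - 2*t else 0

/-- The weight `ψ = -φ'` (a.e.): `2` on `(1/2,1)` and `0` otherwise. -/
def psi (t : ℝ) : ℝ := if 1/2 < t ∧ t < 1 then 2 else 0

/-- The standard orthonormal basis of `ℝ³`. -/
def e3 (i : Fin 3) : E3 := EuclideanSpace.basisFun (Fin 3) ℝ i

/-- The radial unit vector field `ν_x(y) = (y - x)/|y - x|`. -/
def nu (x y : E3) : E3 := ‖y - x‖⁻¹ • (y - x)

/-- Squared Frobenius norm of the differential `|∇u(y)|²`. -/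
def gradSq {m : ℕ} (u : E3 → EuclideanSpace ℝ (Fin m)) (y : E3) : ℝ :=
  ∑ i : Fin 3, ‖fderiv ℝ u y (e3 i)‖ ^ 2

/-- Smoothed Dirichlet energy `D_φ(x,r)`. -/
def Dphi {m : ℕ} (u : E3 → EuclideanSpace ℝ (Fin m)) (x : E3) (r : ℝ) : ℝ :=
  ∫ y : E3, gradSq u y * phi (‖x - y‖ / r)

/-- Smoothed height `H_φ(x,r)`. -/
def Hphi {m : ℕ} (u : E3 → EuclideanSpace ℝ (Fin m)) (x : E3) (r : ℝ) : ℝ :=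
  ∫ y : E3, ‖u y‖ ^ 2 * ‖y - x‖⁻¹ * psi (‖x - y‖ / r)

/-- Smoothed remainder `E_φ(x,r)`. -/
def Ephi {m : ℕ} (u : E3 → EuclideanSpace ℝ (Fin m)) (x : E3) (r : ℝ) : ℝ :=
  ∫ y : E3, ‖fderiv ℝ u y (nu x y)‖ ^ 2 * ‖y - x‖ * psi (‖x - y‖ / r)

/-- Smoothed frequency `N_φ(x,r) = r D_φ(x,r)/H_φ(x,r)`. -/
def Nphi {m : ℕ} (u : E3 → EuclideanSpace ℝ (Fin m)) (x : E3) (r : ℝ) : ℝ :=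
  r * Dphi u x r / Hphi u x r

/-- Frequency pinching `W_s^r(x) = N_φ(x,r) - N_φ(x,s)`. -/
def Wpinch {m : ℕ} (u : E3 → EuclideanSpace ℝ (Fin m)) (x : E3) (s r : ℝ) : ℝ :=
  Nphi u x r - Nphi u x s

/-- Classical height: integral of `|u|²` over the sphere `∂B_s(x)` with respect to the
two-dimensional Hausdorff (surface) measure. -/
def sphHeight {m : ℕ} (u : E3 → EuclideanSpace ℝ (Fin m)) (x : E3) (s : ℝ) : ℝ :=
  ∫ y in sphere x s, ‖u y‖ ^ 2 ∂(μH[2])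

/-- `u` satisfies the inner (target) variation identity on `Ω`. -/
def InnerVariation {m : ℕ} (u : E3 → EuclideanSpace ℝ (Fin m)) (Ω : Set E3) : Prop :=
  ∀ f : E3 → ℝ, (∃ K, LipschitzWith K f) → HasCompactSupport f → tsupport f ⊆ Ω →
    (∫ y : E3, ((inner ℝ (gradient (fun z => ‖u z‖ ^ 2 / 2) y) (gradient f y) : ℝ)
      + gradSq u y * f y)) = 0

/-- `u` satisfies the domain variation identity on `Ω`. -/
def DomainVariation {m : ℕ} (u : E3 → EuclideanSpace ℝ (Fin m)) (Ω : Set E3) : Prop :=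
  ∀ X : E3 → E3, (∃ K, LipschitzWith K X) → HasCompactSupport X → tsupport X ⊆ Ω →
    (∫ y : E3, (2 * ∑ i : Fin 3, ∑ j : Fin 3,
        (inner ℝ (fderiv ℝ u y (e3 i)) (fderiv ℝ u y (e3 j)) : ℝ)
          * (inner ℝ (fderiv ℝ X y (e3 i)) (e3 j) : ℝ)
      - gradSq u y * ∑ j : Fin 3, (inner ℝ (fderiv ℝ X y (e3 j)) (e3 j) : ℝ))) = 0

/-- The affine line through `a` in direction `v`. -/
def lineThrough (a v : E3) : Set E3 := {y | ∃ t : ℝ, y = a + t • v}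

/-- Jones-type `β₂` number `D_μ(x,r)`: infimum over affine lines `L` of
`r⁻³ ∫_{B_r(x)} dist(y,L)² dμ(y)`. -/
def JonesD (μ : Measure E3) (x : E3) (r : ℝ) : ℝ :=
  ⨅ p : E3 × {v : E3 // v ≠ 0},
    (∫ y in ball x r, Metric.infDist y (lineThrough p.1 p.2.1) ^ 2 ∂μ) / r ^ 3

/-!
Test the inner variation identity with the Lipschitz cutoff `f y = φ (‖x - y‖ / r)`, which is
supported in `closedBall x r`. Away from the null set `{x} ∪ ∂B_{r/2}(x) ∪ ∂B_r(x)` it is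
differentiable with `∇f = -(ψ (‖x - y‖ / r) / r) • ν_x`, and `⟪∇(|u|²/2), v⟫ = ⟪∂ᵥu, u⟫`, so the
gradient term of the identity is `-(1/r) ∫ ⟪∂_ν u, u⟫ ψ` and the other term is `D_φ(x,r)`.
-/

open InnerProductSpace Filter Set

lemma phi_eq_min_max (t : ℝ) : phi t = min 1 (max 0 (2 - 2 * t)) := by
  unfold phi
  split_ifs <;> simp only [min_def, max_def] <;> split_ifs <;> linarith

lemma lipschitzWith_phi : LipschitzWith 2 phi := by
  have hlin : LipschitzWith 2 fun t : ℝ => 2 - 2 * t :=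
    LipschitzWith.of_dist_le_mul fun a b => by
      simp only [Real.dist_eq, NNReal.coe_ofNat]
      rw [show 2 - 2 * a - (2 - 2 * b) = -(2 * (a - b)) by ring, abs_neg, abs_mul]
      norm_num
  simpa only [← funext phi_eq_min_max] using (hlin.const_max 0).const_min 1

lemma hasDerivAt_phi {t : ℝ} (h₁ : t ≠ 1 / 2) (h₂ : t ≠ 1) : HasDerivAt phi (-psi t) t := by
  rcases lt_or_gt_of_ne h₁ with ht | ht
  · have hψ : psi t = 0 := if_neg fun h => by linarith [h.1]
    rw [hψ, neg_zero]
    refine (hasDerivAt_const t (1 : ℝ)).congr_of_eventuallyEq ?_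
    filter_upwards [Iio_mem_nhds ht] with s hs
    exact if_pos (le_of_lt hs)
  rcases lt_or_gt_of_ne h₂ with ht' | ht'
  · have hψ : psi t = 2 := if_pos ⟨ht, ht'⟩
    rw [hψ]
    have hlin : HasDerivAt (fun s : ℝ => 2 - 2 * s) (-2) t := by
      simpa using ((hasDerivAt_id t).const_mul 2).const_sub 2
    refine hlin.congr_of_eventuallyEq ?_
    filter_upwards [Ioo_mem_nhds ht ht'] with s hs
    simp only [phi, if_neg (not_le.2 hs.1), if_pos hs.2.le]
  · have hψ : psi t = 0 := if_neg fun h => by linarith [h.2]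
    rw [hψ, neg_zero]
    refine (hasDerivAt_const t (0 : ℝ)).congr_of_eventuallyEq ?_
    filter_upwards [Ioi_mem_nhds ht'] with s hs
    simp only [phi, mem_Ioi] at hs ⊢
    rw [if_neg (by linarith), if_neg (by linarith)]

section RadialCutoff

variable {E : Type*}

def radialCutoff [SeminormedAddCommGroup E] (x : E) (r : ℝ) (y : E) : ℝ := phi (‖x - y‖ / r)

lemma lipschitzWith_radialCutoff [SeminormedAddCommGroup E] (x : E) (r : ℝ) :
    LipschitzWith (2 * ‖r⁻¹‖₊) (radialCutoff x r) := by
  have h := (lipschitzWith_phi.comp (lipschitzWith_smul r⁻¹)).comp (LipschitzWith.dist_right x)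
  rw [mul_one] at h
  convert h using 1
  ext y
  simp [radialCutoff, dist_eq_norm, div_eq_inv_mul]

lemma radialCutoff_eq_zero [SeminormedAddCommGroup E] {x y : E} {r : ℝ} (hr : 0 < r)
    (hy : r < ‖x - y‖) : radialCutoff x r y = 0 := by
  have h : 1 < ‖x - y‖ / r := (one_lt_div hr).2 hy
  simp only [radialCutoff, phi]
  rw [if_neg (by linarith), if_neg (by linarith)]

lemma tsupport_radialCutoff_subset [SeminormedAddCommGroup E] (x : E) {r : ℝ} (hr : 0 < r) :
    tsupport (radialCutoff x r) ⊆ closedBall x r :=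
  closure_minimal
    (Function.support_subset_iff'.2 fun _ hy => radialCutoff_eq_zero hr <| by
      rwa [mem_closedBall, not_le, dist_comm, dist_eq_norm] at hy)
    isClosed_closedBall

lemma hasCompactSupport_radialCutoff [NormedAddCommGroup E] [ProperSpace E] (x : E) {r : ℝ}
    (hr : 0 < r) : HasCompactSupport (radialCutoff x r) :=
  (isCompact_closedBall x r).of_isClosed_subset (isClosed_tsupport _)
    (tsupport_radialCutoff_subset x hr)

variable [NormedAddCommGroup E] [InnerProductSpace ℝ E] [CompleteSpace E]

lemma hasGradientAt_norm_sub {x y : E} (hxy : y ≠ x) :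
    HasGradientAt (fun z => ‖z - x‖) (‖y - x‖⁻¹ • (y - x)) y := by
  have hsq : ‖y - x‖ ^ 2 ≠ 0 := by simpa [sub_eq_zero] using hxy
  have h := (((hasFDerivAt_id y).sub_const x).norm_sq).sqrt hsq
  simp only [Real.sqrt_sq (norm_nonneg _)] at h
  rw [hasGradientAt_iff_hasFDerivAt]
  refine h.congr_fderiv ?_
  ext v
  simp only [id_eq, one_div, mul_inv_rev, map_sub, ContinuousLinearMap.comp_id, smul_apply, sub_apply,
    coe_innerSL_apply, nsmul_eq_mul, Nat.cast_ofNat, smul_eq_mul, map_smul, toDual_apply_apply]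
  field_simp

lemma hasGradientAt_radialCutoff {x y : E} {r : ℝ} (hxy : y ≠ x) (h₁ : ‖x - y‖ / r ≠ 1 / 2)
    (h₂ : ‖x - y‖ / r ≠ 1) :
    HasGradientAt (radialCutoff x r) ((-(psi (‖x - y‖ / r) / r)) • ‖y - x‖⁻¹ • (y - x)) y := by
  rw [norm_sub_rev] at h₁ h₂ ⊢
  have hprofile : HasDerivAt (phi ∘ fun t => t / r) (-psi (‖y - x‖ / r) * (1 / r)) ‖y - x‖ :=
    (hasDerivAt_phi h₁ h₂).comp ‖y - x‖ ((hasDerivAt_id' ‖y - x‖).div_const r)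
  have hfun : radialCutoff x r = (phi ∘ fun t => t / r) ∘ fun z => ‖z - x‖ :=
    funext fun z => by simp [radialCutoff, norm_sub_rev]
  rw [hasGradientAt_iff_hasFDerivAt, map_smul, hfun,
    show -(psi (‖y - x‖ / r) / r) = -psi (‖y - x‖ / r) * (1 / r) by ring]
  exact hprofile.comp_hasFDerivAt y (hasGradientAt_norm_sub hxy).hasFDerivAt

lemma ae_gradient_radialCutoff [FiniteDimensional ℝ E] [Nontrivial E] [MeasurableSpace E]
    [BorelSpace E] (μ : Measure E) [μ.IsAddHaarMeasure] (x : E) (r : ℝ) :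
    ∀ᵐ y ∂μ, gradient (radialCutoff x r) y = (-(psi (‖x - y‖ / r) / r)) • ‖y - x‖⁻¹ • (y - x) := by
  have hnull : μ (sphere x 0 ∪ sphere x (1 / 2 * r) ∪ sphere x (1 * r)) = 0 := by
    simp only [measure_union_null_iff, Measure.addHaar_sphere, and_self]
  filter_upwards [measure_eq_zero_iff_ae_notMem.1 hnull] with y hy
  have hsphere {c : ℝ} (hc : c ≠ 0) (h : ‖x - y‖ / r = c) : y ∈ sphere x (c * r) := by
    have hr : r ≠ 0 := by
      rintro rfl
      exact hc (by simpa using h.symm)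
    rw [mem_sphere, dist_comm, dist_eq_norm, ← h, div_mul_cancel₀ _ hr]
  simp only [mem_union, not_or] at hy
  obtain ⟨⟨h₀, h₁⟩, h₂⟩ := hy
  refine (hasGradientAt_radialCutoff ?_ (fun h => h₁ (hsphere (by norm_num) h))
    (fun h => h₂ (hsphere one_ne_zero h))).gradient
  rintro rfl
  simp at h₀

end RadialCutoff

section Gradient

variable {E F : Type*} [NormedAddCommGroup E] [InnerProductSpace ℝ E] [CompleteSpace E]
  [NormedAddCommGroup F] [InnerProductSpace ℝ F]

lemma ContDiff.continuous_gradient {f : E → ℝ} (hf : ContDiff ℝ 1 f) : Continuous (gradient f) :=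
  (toDual ℝ E).symm.continuous.comp (hf.continuous_fderiv one_ne_zero)

lemma inner_gradient_half_norm_sq {u : E → F} {y : E} (hu : DifferentiableAt ℝ u y) (v : E) :
    ⟪gradient (fun z => ‖u z‖ ^ 2 / 2) y, v⟫_ℝ = ⟪fderiv ℝ u y v, u y⟫_ℝ := by
  have h := hu.hasFDerivAt.norm_sq.mul_const (1 / 2 : ℝ)
  simp only [mul_one_div] at h
  rw [inner_gradient_left, h.fderiv]
  simp [real_inner_comm]

lemma integrable_inner_gradient_of_lipschitzWith [FiniteDimensional ℝ E] [MeasurableSpace E]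
    [BorelSpace E] {μ : Measure E} [IsFiniteMeasureOnCompacts μ] {g f : E → ℝ}
    (hg : Continuous (gradient g)) {K : NNReal} (hf : LipschitzWith K f)
    (hfc : HasCompactSupport f) : Integrable (fun y => ⟪gradient g y, gradient f y⟫_ℝ) μ := by
  obtain ⟨C, hC⟩ := hfc.isCompact.exists_bound_of_continuousOn hg.continuousOn
  have hmeas : Measurable (gradient f) :=
    (toDual ℝ E).symm.continuous.measurable.comp (measurable_fderiv ℝ f)
  refine (integrableOn_iff_integrable_of_support_subset ?_).1
    (Measure.integrableOn_of_bounded (M := C * K) hfc.isCompact.measure_ne_top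
      (hg.measurable.inner hmeas).aestronglyMeasurable ?_)
  · intro y hy
    by_contra h
    exact hy (by simp [gradient, fderiv_of_notMem_tsupport ℝ h])
  · filter_upwards [ae_restrict_mem (isClosed_tsupport f).measurableSet] with y hy
    have hgrad : ‖gradient f y‖ ≤ K :=
      ((toDual ℝ E).symm.norm_map _).trans_le (norm_fderiv_le_of_lipschitz ℝ hf)
    calc ‖⟪gradient g y, gradient f y⟫_ℝ‖ ≤ ‖gradient g y‖ * ‖gradient f y‖ :=
          norm_inner_le_norm _ _
      _ ≤ C * K := by gcongr; exacts [(norm_nonneg _).trans (hC y hy), hC y hy]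

end Gradient

lemma continuous_gradSq {m : ℕ} {u : E3 → EuclideanSpace ℝ (Fin m)} (hu : ContDiff ℝ 1 u) :
    Continuous (gradSq u) := by
  have := hu.continuous_fderiv one_ne_zero
  unfold gradSq
  fun_prop

theorem stmt_0_general {m : ℕ} (u : E3 → EuclideanSpace ℝ (Fin m))
    (hu : ContDiff ℝ 1 u) (hiv : InnerVariation u (ball (0 : E3) 64)) :
    ∀ (x : E3) (r : ℝ), 0 < r → closedBall x r ⊆ ball (0 : E3) 64 →
      Dphi u x r
        = (1 / r) * ∫ y : E3,
            (inner ℝ (fderiv ℝ u y (nu x y)) (u y) : ℝ) * psi (‖x - y‖ / r) := by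
  intro x r hr hball
  have hlip := lipschitzWith_radialCutoff x r
  have hsupp := hasCompactSupport_radialCutoff x hr
  have hvar := hiv (radialCutoff x r) ⟨_, hlip⟩ hsupp
    ((tsupport_radialCutoff_subset x hr).trans hball)
  have henergy : Integrable fun y => gradSq u y * radialCutoff x r y :=
    ((continuous_gradSq hu).mul hlip.continuous).integrable_of_hasCompactSupport hsupp.mul_left
  rw [integral_add (integrable_inner_gradient_of_lipschitzWith
    ((hu.norm_sq ℝ).div_const 2).continuous_gradient hlip hsupp) henergy] at hvar
  have hpairing : (fun y => ⟪gradient (fun z => ‖u z‖ ^ 2 / 2) y, gradient (radialCutoff x r) y⟫_ℝ)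
      =ᵐ[volume] fun y => -(1 / r) * (⟪fderiv ℝ u y (nu x y), u y⟫_ℝ * psi (‖x - y‖ / r)) := by
    filter_upwards [ae_gradient_radialCutoff volume x r] with y hy
    rw [hy, real_inner_smul_right, inner_gradient_half_norm_sq (hu.differentiable one_ne_zero y)]
    simp only [nu]
    ring
  rw [integral_congr_ae hpairing, integral_const_mul] at hvar
  change ∫ y, gradSq u y * radialCutoff x r y = _
  linarith

/-- integration-by-parts identity for the smoothed Dirichlet energy. -/
theorem stmt_0 {m : ℕ} (hm : 1 ≤ m) (u : E3 → EuclideanSpace ℝ (Fin m))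
    (hu : ContDiff ℝ 1 u) (hiv : InnerVariation u (ball (0 : E3) 64)) :
    ∀ (x : E3) (r : ℝ), 0 < r → closedBall x r ⊆ ball (0 : E3) 64 →
      Dphi u x r
        = (1 / r) * ∫ y : E3,
            (inner ℝ (fderiv ℝ u y (nu x y)) (u y) : ℝ) * psi (‖x - y‖ / r) :=
  stmt_0_general u hu hiv
end
end

section
/- Let μ be a finite nonnegative Borel measure on ℝ³, let x₀ ∈ ℝ³ and r₀ > 0 satisfy μ(B_{r₀}(x₀)) > 0, and let x̄ be the barycenter of μ in B_{r₀}(x₀). Suppose v₁, v₂, v₃ is an orthonormal basis of ℝ³ and λ₁ ≥ λ₂ ≥ λ₃ are real numbers such that ∫_{B_{r₀}(x₀)} ((x − x̄)·v_i)((x − x̄)·v_j) dμ(x) = λ_i δ_{ij} for all i, j. Then D_μ(x₀, r₀) = (λ₂ + λ₃)/r₀³, and the infimum defining D_μ(x₀, r₀) is attained by the line L = x̄ + span{v₁}. -/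
/-
For a unit vector `w`, the squared distance from `y` to the line `a + ℝ w` is
`‖y - a‖² - ⟪y - a, w⟫²`. Expanding around the barycenter `x̄`, where all first moments vanish,
the parallel axis identity gives
`∫ dist(y, L)² dμ = (λ₁ + λ₂ + λ₃) - ∑ λᵢ ⟪vᵢ, w⟫² + μ(B) (‖x̄ - a‖² - ⟪x̄ - a, w⟫²)`.
The last term is nonnegative by Cauchy–Schwarz and vanishes for `a = x̄`; the weights `⟪vᵢ, w⟫²`
sum to `1`, so the middle sum is at most `λ₁`, with equality for `w = v₁`.
-/

open MeasureTheory Metric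

noncomputable section

open RealInnerProductSpace Bornology

lemma lineThrough_smul_of_ne_zero (a v : E3) {c : ℝ} (hc : c ≠ 0) :
    lineThrough a (c • v) = lineThrough a v := by
  ext y
  constructor
  · rintro ⟨t, rfl⟩
    exact ⟨t * c, by rw [smul_smul]⟩
  · rintro ⟨t, rfl⟩
    exact ⟨t * c⁻¹, by rw [smul_smul, mul_assoc, inv_mul_cancel₀ hc, mul_one]⟩

lemma dist_add_smul_sq (y a w : E3) (t : ℝ) (hw : ‖w‖ = 1) :
    dist y (a + t • w) ^ 2 = ‖y - a‖ ^ 2 - ⟪y - a, w⟫ ^ 2 + (⟪y - a, w⟫ - t) ^ 2 := by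
  rw [dist_eq_norm, ← sub_sub, norm_sub_sq_real, inner_smul_right, norm_smul, Real.norm_eq_abs,
    hw, mul_one, sq_abs]
  ring

lemma infDist_lineThrough_sq (y a w : E3) (hw : ‖w‖ = 1) :
    infDist y (lineThrough a w) ^ 2 = ‖y - a‖ ^ 2 - ⟪y - a, w⟫ ^ 2 := by
  suffices infDist y (lineThrough a w) = dist y (a + ⟪y - a, w⟫ • w) by
    rw [this, dist_add_smul_sq _ _ _ _ hw, sub_self]
    ring
  refine le_antisymm (infDist_le_dist_of_mem ⟨_, rfl⟩)
    ((le_infDist (s := lineThrough a w) ⟨a, 0, by simp⟩).2 ?_)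
  rintro _ ⟨t, rfl⟩
  refine (pow_le_pow_iff_left₀ dist_nonneg dist_nonneg two_ne_zero).1 ?_
  rw [dist_add_smul_sq _ _ _ _ hw, dist_add_smul_sq _ _ _ _ hw, sub_self]
  nlinarith [sq_nonneg (⟪y - a, w⟫ - t)]

section Moments

variable {E : Type*} [NormedAddCommGroup E] [InnerProductSpace ℝ E] [FiniteDimensional ℝ E]
  [MeasurableSpace E] [BorelSpace E] {μ : Measure E} [IsFiniteMeasure μ] {s : Set E}

def barycenter (μ : Measure E) (s : Set E) : E := (μ.real s)⁻¹ • ∫ x in s, x ∂μ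

lemma Continuous.integrableOn_of_isBounded {F : Type*} [NormedAddCommGroup F] {f : E → F}
    (hf : Continuous f) (hs : IsBounded s) : IntegrableOn f s μ :=
  (hf.continuousOn.integrableOn_compact hs.isCompact_closure).mono_set subset_closure

lemma setIntegral_inner_sub_barycenter (hs : IsBounded s) (hμs : μ s ≠ 0) (u : E) :
    ∫ x in s, ⟪x - barycenter μ s, u⟫ ∂μ = 0 := by
  have hsub : ∫ x in s, (x - barycenter μ s) ∂μ = 0 := by
    rw [integral_sub (continuous_id'.integrableOn_of_isBounded hs)
      (integrableOn_const (measure_ne_top μ s)),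
      setIntegral_const, barycenter, smul_smul,
      mul_inv_cancel₀ ((measureReal_ne_zero_iff (measure_ne_top μ s)).2 hμs), one_smul, sub_self]
  have hint : IntegrableOn (fun x ↦ x - barycenter μ s) s μ :=
    (continuous_id'.sub continuous_const).integrableOn_of_isBounded hs
  simp_rw [real_inner_comm u]
  rw [integral_inner hint, hsub, inner_zero_right]

lemma setIntegral_parallel_axis (hs : IsBounded s) (hμs : μ s ≠ 0) (a w : E) :
    ∫ x in s, (‖x - a‖ ^ 2 - ⟪x - a, w⟫ ^ 2) ∂μ =
      ∫ x in s, (‖x - barycenter μ s‖ ^ 2 - ⟪x - barycenter μ s, w⟫ ^ 2) ∂μ +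
        μ.real s * (‖barycenter μ s - a‖ ^ 2 - ⟪barycenter μ s - a, w⟫ ^ 2) := by
  set c := barycenter μ s
  have hsplit : ∀ x : E, ‖x - a‖ ^ 2 - ⟪x - a, w⟫ ^ 2 =
      (‖x - c‖ ^ 2 - ⟪x - c, w⟫ ^ 2) + 2 * ⟪x - c, (c - a) - ⟪c - a, w⟫ • w⟫ +
        (‖c - a‖ ^ 2 - ⟪c - a, w⟫ ^ 2) := by
    intro x
    rw [show x - a = (x - c) + (c - a) by abel, norm_add_sq_real, inner_add_left]
    simp only [inner_sub_right, inner_smul_right]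
    ring
  conv_lhs => enter [2, x]; rw [hsplit]
  rw [integral_add (Continuous.integrableOn_of_isBounded (by fun_prop) hs) (integrable_const _),
    integral_add (Continuous.integrableOn_of_isBounded (by fun_prop) hs)
      (Continuous.integrableOn_of_isBounded (by fun_prop) hs),
    integral_const_mul, setIntegral_inner_sub_barycenter hs hμs, setIntegral_const, smul_eq_mul]
  ring

variable {ι : Type*} [Fintype ι] [DecidableEq ι] {c : E} {lam : ι → ℝ}

lemma setIntegral_inner_sq_eq_sum (hs : IsBounded s) (b : OrthonormalBasis ι ℝ E)
    (hdiag : ∀ i j, ∫ x in s, ⟪x - c, b i⟫ * ⟪x - c, b j⟫ ∂μ = if i = j then lam i else 0)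
    (u : E) : ∫ x in s, ⟪x - c, u⟫ ^ 2 ∂μ = ∑ i, lam i * ⟪b i, u⟫ ^ 2 := by
  have hexpand : ∀ z : E, ⟪z, u⟫ ^ 2 = ∑ i, ∑ j, ⟪b i, u⟫ * ⟪b j, u⟫ * (⟪z, b i⟫ * ⟪z, b j⟫) := by
    intro z
    rw [← b.sum_inner_mul_inner z u, sq, Finset.sum_mul_sum]
    exact Finset.sum_congr rfl fun i _ ↦ Finset.sum_congr rfl fun j _ ↦ by ring
  have hint : ∀ i j, IntegrableOn (fun x ↦ ⟪x - c, b i⟫ * ⟪x - c, b j⟫) s μ := fun i j ↦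
    Continuous.integrableOn_of_isBounded (by fun_prop) hs
  conv_lhs => enter [2, x]; rw [hexpand]
  rw [integral_finsetSum _ fun i _ ↦ integrable_finsetSum _ fun j _ ↦ (hint i j).const_mul _]
  simp_rw [integral_finsetSum _ fun j _ ↦ (hint _ j).const_mul _, integral_const_mul, hdiag,
    mul_ite, mul_zero, Finset.sum_ite_eq, Finset.mem_univ, if_true]
  exact Finset.sum_congr rfl fun i _ ↦ by ring

lemma setIntegral_norm_sq_eq_sum (hs : IsBounded s) (b : OrthonormalBasis ι ℝ E)
    (hdiag : ∀ i j, ∫ x in s, ⟪x - c, b i⟫ * ⟪x - c, b j⟫ ∂μ = if i = j then lam i else 0) :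
    ∫ x in s, ‖x - c‖ ^ 2 ∂μ = ∑ i, lam i := by
  simp_rw [← b.sum_sq_inner_left]
  rw [integral_finsetSum _ fun i _ ↦ Continuous.integrableOn_of_isBounded (by fun_prop) hs]
  simp_rw [sq, hdiag, if_pos]

end Moments

section Lines

variable {μ : Measure E3} [IsFiniteMeasure μ] {s : Set E3}

lemma setIntegral_infDist_lineThrough_sq {ι : Type*} [Fintype ι] [DecidableEq ι] {lam : ι → ℝ}
    (hs : IsBounded s) (hμs : μ s ≠ 0) (b : OrthonormalBasis ι ℝ E3)
    (hdiag : ∀ i j, ∫ x in s, ⟪x - barycenter μ s, b i⟫ * ⟪x - barycenter μ s, b j⟫ ∂μ =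
      if i = j then lam i else 0)
    (a w : E3) (hw : ‖w‖ = 1) :
    ∫ x in s, infDist x (lineThrough a w) ^ 2 ∂μ =
      ∑ i, lam i - ∑ i, lam i * ⟪b i, w⟫ ^ 2 +
        μ.real s * (‖barycenter μ s - a‖ ^ 2 - ⟪barycenter μ s - a, w⟫ ^ 2) := by
  simp_rw [infDist_lineThrough_sq _ _ _ hw]
  rw [setIntegral_parallel_axis hs hμs,
    integral_sub (Continuous.integrableOn_of_isBounded (by fun_prop) hs)
      (Continuous.integrableOn_of_isBounded (by fun_prop) hs),
    setIntegral_norm_sq_eq_sum hs b hdiag, setIntegral_inner_sq_eq_sum hs b hdiag]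

variable {lam : Fin 3 → ℝ}

lemma add_le_setIntegral_infDist_lineThrough_sq (hs : IsBounded s) (hμs : μ s ≠ 0)
    (b : OrthonormalBasis (Fin 3) ℝ E3)
    (hdiag : ∀ i j, ∫ x in s, ⟪x - barycenter μ s, b i⟫ * ⟪x - barycenter μ s, b j⟫ ∂μ =
      if i = j then lam i else 0)
    (h21 : lam 2 ≤ lam 1) (h10 : lam 1 ≤ lam 0) (a w : E3) (hw : ‖w‖ = 1) :
    lam 1 + lam 2 ≤ ∫ x in s, infDist x (lineThrough a w) ^ 2 ∂μ := by
  rw [setIntegral_infDist_lineThrough_sq hs hμs b hdiag a w hw, Fin.sum_univ_three]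
  have hlam : ∀ i, lam i ≤ lam 0 := by
    intro i
    fin_cases i
    exacts [le_rfl, h10, h21.trans h10]
  have hweights : ∑ i, lam i * ⟪b i, w⟫ ^ 2 ≤ lam 0 :=
    calc ∑ i, lam i * ⟪b i, w⟫ ^ 2 ≤ ∑ i, lam 0 * ⟪b i, w⟫ ^ 2 := by
          gcongr with i
          exact hlam i
      _ = lam 0 := by rw [← Finset.mul_sum, b.sum_sq_inner_right, hw, one_pow, mul_one]
  have hcs : ⟪barycenter μ s - a, w⟫ ^ 2 ≤ ‖barycenter μ s - a‖ ^ 2 :=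
    sq_le_sq.2 (by simpa [hw] using abs_real_inner_le_norm (barycenter μ s - a) w)
  nlinarith [mul_nonneg (measureReal_nonneg (μ := μ) (s := s)) (sub_nonneg.2 hcs)]

lemma setIntegral_infDist_lineThrough_barycenter_sq (hs : IsBounded s) (hμs : μ s ≠ 0)
    (b : OrthonormalBasis (Fin 3) ℝ E3)
    (hdiag : ∀ i j, ∫ x in s, ⟪x - barycenter μ s, b i⟫ * ⟪x - barycenter μ s, b j⟫ ∂μ =
      if i = j then lam i else 0) :
    ∫ x in s, infDist x (lineThrough (barycenter μ s) (b 0)) ^ 2 ∂μ = lam 1 + lam 2 := by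
  rw [setIntegral_infDist_lineThrough_sq hs hμs b hdiag _ _ (b.orthonormal.1 0)]
  simp only [Fin.sum_univ_three, b.inner_eq_ite, Fin.isValue, Fin.reduceEq, ↓reduceIte, sub_self,
    norm_zero, inner_zero_left]
  ring

end Lines

/-- linear algebraic characterization of the Jones β₂-number, and attainment
of the infimum by the line through the barycenter in the top eigendirection. -/
theorem stmt_11 (μ : Measure E3) [IsFiniteMeasure μ] (x₀ : E3) (r₀ : ℝ) (hr₀ : 0 < r₀)
    (hμ : 0 < μ (ball x₀ r₀)) (xbar : E3)
    (hxbar : xbar = (μ (ball x₀ r₀)).toReal⁻¹ • ∫ x in ball x₀ r₀, x ∂μ)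
    (v : Fin 3 → E3) (hv : Orthonormal ℝ v) (lam : Fin 3 → ℝ)
    (hord21 : lam 2 ≤ lam 1) (hord10 : lam 1 ≤ lam 0)
    (hdiag : ∀ i j : Fin 3,
      (∫ x in ball x₀ r₀,
          (inner ℝ (x - xbar) (v i) : ℝ) * (inner ℝ (x - xbar) (v j) : ℝ) ∂μ)
        = if i = j then lam i else 0) :
    JonesD μ x₀ r₀ = (lam 1 + lam 2) / r₀ ^ 3
      ∧ (∫ y in ball x₀ r₀, Metric.infDist y (lineThrough xbar (v 0)) ^ 2 ∂μ) / r₀ ^ 3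
          = JonesD μ x₀ r₀ := by
  obtain ⟨b, rfl⟩ : ∃ b : OrthonormalBasis (Fin 3) ℝ E3, ⇑b = v :=
    ⟨.mk hv (hv.linearIndependent.span_eq_top_of_card_eq_finrank' (by simp)).ge, by simp⟩
  obtain rfl : xbar = barycenter μ (ball x₀ r₀) := hxbar
  have hs : IsBounded (ball x₀ r₀) := isBounded_ball
  have hopt := setIntegral_infDist_lineThrough_barycenter_sq hs hμ.ne' b hdiag
  have hbound : ∀ p : E3 × {v : E3 // v ≠ 0}, (lam 1 + lam 2) / r₀ ^ 3 ≤
      (∫ y in ball x₀ r₀, infDist y (lineThrough p.1 p.2.1) ^ 2 ∂μ) / r₀ ^ 3 := by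
    rintro ⟨a, w, hw⟩
    rw [← lineThrough_smul_of_ne_zero a w (inv_ne_zero (norm_ne_zero_iff.2 hw))]
    gcongr
    exact add_le_setIntegral_infDist_lineThrough_sq hs hμ.ne' b hdiag hord21 hord10 a _
      (norm_smul_inv_norm hw)
  let p₀ : E3 × {v : E3 // v ≠ 0} := (barycenter μ (ball x₀ r₀), ⟨b 0, b.orthonormal.ne_zero 0⟩)
  have : Nonempty (E3 × {v : E3 // v ≠ 0}) := ⟨p₀⟩
  have hJ : JonesD μ x₀ r₀ = (lam 1 + lam 2) / r₀ ^ 3 :=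
    le_antisymm ((ciInf_le ⟨_, Set.forall_mem_range.2 hbound⟩ p₀).trans_eq (by simp [p₀, hopt]))
      (le_ciInf hbound)
  exact ⟨hJ, by rw [hJ, hopt]⟩
end
end

section
/- Let N : (0, ∞) → ℝ be nondecreasing, let σ > 0, let A be a positive integer, and let t be a real number with σ < t ≤ 2^A σ. Then ∫_σ^t ( N(32 s) − N(s) ) s⁻¹ ds ≤ 6 (log 2) ( N(2^{A+5} σ) − N(σ) ). -/
open MeasureTheory Metric

noncomputable section

/-!
With `g u = N u / u`, the substitution `u = c s` turns the integral of `(N (c s) - N s) / s`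
over `[a, b]` into `∫_b^{cb} g - ∫_a^{ca} g`. On each window `[x, c x]` the monotone `N` is
squeezed between its endpoint values, and `∫_x^{cx} du / u = log c`, so the difference is at most
`log c * (N (c b) - N a)`. For `c = 32 = 2 ^ 5` this gives the bound with `5 log 2`.
-/

open Set intervalIntegral

section MonotoneOnIoi

variable {N : ℝ → ℝ}

lemma MonotoneOn.intervalIntegrable_mul_inv (hN : MonotoneOn N (Ioi 0)) {a b : ℝ}
    (ha : 0 < a) (hb : 0 < b) : IntervalIntegrable (fun u => N u * u⁻¹) volume a b := by
  have hpos : uIcc a b ⊆ Ioi 0 := fun u hu => lt_of_lt_of_le (lt_min ha hb) hu.1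
  exact (hN.mono hpos).intervalIntegrable.mul_continuousOn
    (continuousOn_id.inv₀ fun u hu => (hpos hu).ne')

lemma MonotoneOn.comp_const_mul (hN : MonotoneOn N (Ioi 0)) {c : ℝ} (hc : 0 < c) :
    MonotoneOn (fun s => N (c * s)) (Ioi 0) := fun _ hx _ hy hxy =>
  hN (mul_pos hc hx) (mul_pos hc hy) (mul_le_mul_of_nonneg_left hxy hc.le)

lemma integral_comp_const_mul_mul_inv (N : ℝ → ℝ) (a b : ℝ) {c : ℝ} (hc : c ≠ 0) :
    ∫ s in a..b, N (c * s) * s⁻¹ = ∫ u in c * a..c * b, N u * u⁻¹ := by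
  have hpt : ∀ s, N (c * s) * s⁻¹ = c * (N (c * s) * (c * s)⁻¹) := fun s => by
    rw [mul_inv, mul_left_comm c, ← mul_assoc c, mul_inv_cancel₀ hc, one_mul]
  simp_rw [hpt, intervalIntegral.integral_const_mul,
    integral_comp_mul_left (fun u => N u * u⁻¹) hc, smul_eq_mul, mul_inv_cancel_left₀ hc]

lemma MonotoneOn.integral_sub_comp_const_mul_mul_inv (hN : MonotoneOn N (Ioi 0)) {a b c : ℝ}
    (ha : 0 < a) (hb : 0 < b) (hc : 0 < c) :
    ∫ s in a..b, (N (c * s) - N s) * s⁻¹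
      = (∫ u in b..c * b, N u * u⁻¹) - ∫ u in a..c * a, N u * u⁻¹ := by
  have hg := fun {x y : ℝ} (hx : 0 < x) (hy : 0 < y) => hN.intervalIntegrable_mul_inv hx hy
  simp_rw [sub_mul]
  rw [integral_sub ((hN.comp_const_mul hc).intervalIntegrable_mul_inv ha hb) (hg ha hb),
    integral_comp_const_mul_mul_inv N a b hc.ne',
    integral_interval_sub_interval_comm' (hg (mul_pos hc ha) (mul_pos hc hb)) (hg ha hb)
      (hg (mul_pos hc ha) ha)]

lemma integral_const_mul_inv_of_pos (k : ℝ) {x c : ℝ} (hx : 0 < x) (hc : 0 < c) :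
    ∫ u in x..c * x, k * u⁻¹ = k * Real.log c := by
  rw [intervalIntegral.integral_const_mul, integral_inv_of_pos hx (mul_pos hc hx),
    mul_div_cancel_right₀ c hx.ne']

lemma MonotoneOn.integral_mul_inv_le (hN : MonotoneOn N (Ioi 0)) {x c : ℝ} (hx : 0 < x)
    (hc : 1 ≤ c) : ∫ u in x..c * x, N u * u⁻¹ ≤ N (c * x) * Real.log c := by
  have hcx : 0 < c * x := mul_pos (zero_lt_one.trans_le hc) hx
  rw [← integral_const_mul_inv_of_pos _ hx (zero_lt_one.trans_le hc)]
  refine integral_mono_on (le_mul_of_one_le_left hx.le hc) (hN.intervalIntegrable_mul_inv hx hcx)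
    (monotoneOn_const.intervalIntegrable_mul_inv hx hcx) fun u hu => ?_
  have hu0 := hx.trans_le hu.1
  exact mul_le_mul_of_nonneg_right (hN hu0 hcx hu.2) (inv_nonneg.2 hu0.le)

lemma MonotoneOn.le_integral_mul_inv (hN : MonotoneOn N (Ioi 0)) {x c : ℝ} (hx : 0 < x)
    (hc : 1 ≤ c) : N x * Real.log c ≤ ∫ u in x..c * x, N u * u⁻¹ := by
  have hcx : 0 < c * x := mul_pos (zero_lt_one.trans_le hc) hx
  rw [← integral_const_mul_inv_of_pos _ hx (zero_lt_one.trans_le hc)]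
  refine integral_mono_on (le_mul_of_one_le_left hx.le hc)
    (monotoneOn_const.intervalIntegrable_mul_inv hx hcx) (hN.intervalIntegrable_mul_inv hx hcx)
    fun u hu => ?_
  have hu0 := hx.trans_le hu.1
  exact mul_le_mul_of_nonneg_right (hN hx hu0 hu.1) (inv_nonneg.2 hu0.le)

theorem MonotoneOn.integral_sub_comp_const_mul_mul_inv_le (hN : MonotoneOn N (Ioi 0))
    {a b c : ℝ} (ha : 0 < a) (hb : 0 < b) (hc : 1 ≤ c) :
    ∫ s in a..b, (N (c * s) - N s) * s⁻¹ ≤ Real.log c * (N (c * b) - N a) := by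
  rw [hN.integral_sub_comp_const_mul_mul_inv ha hb (zero_lt_one.trans_le hc)]
  linarith [hN.integral_mul_inv_le hb hc, hN.le_integral_mul_inv ha hc]

end MonotoneOnIoi

theorem stmt_16_general (N : ℝ → ℝ) (hN : MonotoneOn N (Set.Ioi (0 : ℝ))) (σ : ℝ) (hσ : 0 < σ)
    (A : ℕ) (t : ℝ) (ht1 : σ < t) (ht2 : t ≤ 2 ^ A * σ) :
    (∫ s in σ..t, (N (32 * s) - N s) * s⁻¹)
      ≤ 6 * Real.log 2 * (N (2 ^ (A + 5) * σ) - N σ) := by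
  have ht : 0 < t := hσ.trans ht1
  have hlog32 : Real.log 32 = 5 * Real.log 2 := by
    rw [show (32 : ℝ) = 2 ^ 5 by norm_num, Real.log_pow, Nat.cast_ofNat]
  have h32t : 32 * t ≤ 2 ^ (A + 5) * σ := by
    rw [pow_add]
    nlinarith
  have hσ32t : σ ≤ 32 * t := by linarith
  have hN32t : N (32 * t) ≤ N (2 ^ (A + 5) * σ) :=
    hN (mul_pos (by norm_num) ht) (show (0 : ℝ) < _ by positivity) h32t
  have hNσ : N σ ≤ N (32 * t) := hN hσ (mul_pos (by norm_num) ht) hσ32t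
  have hlog2 : 0 < Real.log 2 := Real.log_pos one_lt_two
  calc (∫ s in σ..t, (N (32 * s) - N s) * s⁻¹)
      ≤ Real.log 32 * (N (32 * t) - N σ) :=
        hN.integral_sub_comp_const_mul_mul_inv_le hσ ht (by norm_num)
    _ ≤ 6 * Real.log 2 * (N (2 ^ (A + 5) * σ) - N σ) := by
        rw [hlog32]
        nlinarith

/-- dyadic telescoping estimate for the frequency pinching integral. -/
theorem stmt_16 (N : ℝ → ℝ) (hN : MonotoneOn N (Set.Ioi (0 : ℝ))) (σ : ℝ) (hσ : 0 < σ)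
    (A : ℕ) (hA : 1 ≤ A) (t : ℝ) (ht1 : σ < t) (ht2 : t ≤ 2 ^ A * σ) :
    (∫ s in σ..t, (N (32 * s) - N s) * s⁻¹)
      ≤ 6 * Real.log 2 * (N (2 ^ (A + 5) * σ) - N σ) :=
  stmt_16_general N hN σ hσ A t ht1 ht2
end
end

section
/- Let m ≥ 1, let x₀ ∈ ℝ³, R > 0, α ∈ ℝ, and let u be a C¹ map from a neighborhood of B̄_R(x₀) to ℝ^m. Define D(r) = ∫_{B_r(x₀)} |∇u|² dx, H(r) = ∫_{∂B_r(x₀)} |u|² dS, and the Weiss energy 𝒲(r) = r^{−(1+2α)} D(r) − α r^{−(2+2α)} H(r). Assume that for every r ∈ (0, R): (i) D(r) = ∫_{∂B_r(x₀)} (∂_ν u · u) dS, where ∂_ν u is the derivative of u in the outward radial direction, and (ii) D is differentiable at r with D′(r) = D(r)/r + 2 ∫_{∂B_r(x₀)} |∂_ν u|² dS. Then for every r ∈ (0, R), 𝒲 is differentiable at r and 𝒲′(r) = (2/r^{3+2α}) ∫_{∂B_r(x₀)} | (x − x₀) · ∇u(x) − α u(x) |² dS(x), where (x − x₀) · ∇u(x)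 denotes the directional derivative Du(x)[x − x₀]. -/
open MeasureTheory Metric

noncomputable section

/-!
Write `H(t) = t² ∫_{S²} |u(x₀ + tθ)|² dθ`. Differentiating under the integral sign gives
`H' = 2H/r + 2∫_{∂B_r} ∂_ν u · u = 2H/r + 2D` by the representation (i) of `D`. With (ii),
`D' = D/r + 2∫_{∂B_r} |∂_ν u|²`, the product rule turns `𝒲'` into
`2 r^{-(3+2α)} (r² ∫_{∂B_r} |∂_ν u|² - 2αr D + α² H)`, which is the expansion of
`2 r^{-(3+2α)} ∫_{∂B_r} |r ∂_ν u - α u|²` because `x - x₀ = r ν` on `∂B_r`.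
The scaling `x = x₀ + rθ` needs the surface measure of `S²` to be finite; `S²` is a Lipschitz image
of a square under spherical coordinates.
-/

open Topology

def sphericalCoords (p : Fin 2 → ℝ) : E3 :=
  !₂[Real.sin (p 0) * Real.cos (p 1), Real.sin (p 0) * Real.sin (p 1), Real.cos (p 0)]

lemma contDiff_sphericalCoords : ContDiff ℝ 1 sphericalCoords := by
  refine (EuclideanSpace.equiv (Fin 3) ℝ).symm.contDiff.comp ?_
  refine contDiff_pi.2 fun i => ?_
  fin_cases i <;> dsimp <;> fun_prop

lemma sphere_subset_image_sphericalCoords :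
    sphere (0 : E3) 1 ⊆ sphericalCoords '' closedBall 0 4 := by
  intro x hx
  have hsum : x 0 ^ 2 + x 1 ^ 2 + x 2 ^ 2 = 1 := by
    have h := EuclideanSpace.norm_eq x
    rw [mem_sphere_zero_iff_norm.mp hx, eq_comm, Real.sqrt_eq_one] at h
    simpa [Fin.sum_univ_three, sq_abs] using h
  have hx2 : -1 ≤ x 2 ∧ x 2 ≤ 1 := abs_le.mp (abs_le_one_iff_mul_self_le_one.mpr (by nlinarith))
  set z : ℂ := ⟨x 0, x 1⟩
  have hsin : Real.sin (Real.arccos (x 2)) = ‖z‖ := by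
    rw [Real.sin_arccos, Complex.norm_def, Complex.normSq_mk]
    congr 1
    linarith
  refine ⟨![Real.arccos (x 2), Complex.arg z], ?_, ?_⟩
  · rw [mem_closedBall, dist_zero_right, pi_norm_le_iff_of_nonneg (by norm_num)]
    intro i
    fin_cases i
    · simpa [abs_of_nonneg (Real.arccos_nonneg _)] using
        (Real.arccos_le_pi (x 2)).trans Real.pi_le_four
    · simpa using (Complex.abs_arg_le_pi z).trans Real.pi_le_four
  · ext i
    fin_cases i
    · simp [sphericalCoords, hsin, Complex.norm_mul_cos_arg, z]
    · simp [sphericalCoords, hsin, Complex.norm_mul_sin_arg, z]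
    · simp [sphericalCoords, Real.cos_arccos hx2.1 hx2.2]

lemma hausdorffMeasure_unitSphere_lt_top : μH[2] (sphere (0 : E3) 1) < ⊤ := by
  have hK : IsCompact (closedBall (0 : Fin 2 → ℝ) 4) := isCompact_closedBall 0 4
  obtain ⟨C, hC⟩ := (contDiff_sphericalCoords.locallyLipschitz.locallyLipschitzOn
    (s := closedBall 0 4)).exists_lipschitzOnWith_of_compact hK
  have hvol : μH[2] (closedBall (0 : Fin 2 → ℝ) 4) < ⊤ := by
    simpa using hausdorffMeasure_pi_real (ι := Fin 2) ▸ hK.measure_lt_top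
  calc μH[2] (sphere (0 : E3) 1) ≤ μH[2] (sphericalCoords '' closedBall 0 4) :=
        measure_mono sphere_subset_image_sphericalCoords
    _ ≤ C ^ (2 : ℝ) * μH[2] (closedBall (0 : Fin 2 → ℝ) 4) :=
        hC.hausdorffMeasure_image_le zero_le_two
    _ < ⊤ := ENNReal.mul_lt_top (by simp) hvol

section Scaling

variable {E : Type*} [NormedAddCommGroup E] [NormedSpace ℝ E] {d r : ℝ}

lemma preimage_add_smul_sphere (x₀ : E) (hr : 0 < r) :
    (fun θ : E => x₀ + r • θ) ⁻¹' sphere x₀ r = sphere 0 1 := by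
  ext θ
  simp [norm_smul, abs_of_pos hr, hr.ne']

variable [MeasurableSpace E] [BorelSpace E]

lemma map_add_smul_hausdorffMeasure (hd : 0 ≤ d) (x₀ : E) (hr : r ≠ 0) :
    Measure.map (fun θ : E => x₀ + r • θ) μH[d] = (‖r‖₊⁻¹ ^ d) • μH[d] := by
  have hcomp : (fun θ : E => x₀ + r • θ) = IsometryEquiv.addLeft x₀ ∘ AffineMap.homothety 0 r := by
    ext θ; simp [AffineMap.homothety_apply]
  rw [hcomp, ← Measure.map_map (IsometryEquiv.addLeft x₀).continuous.measurable
    (AffineMap.homothety_continuous 0 r).measurable, map_homothety_hausdorffMeasure hd 0 hr,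
    Measure.map_smul, IsometryEquiv.map_hausdorffMeasure]

lemma hausdorffMeasure_restrict_sphere (hd : 0 ≤ d) (x₀ : E) (hr : 0 < r) :
    μH[d].restrict (sphere x₀ r) =
      (‖r‖₊ ^ d) • Measure.map (fun θ : E => x₀ + r • θ) (μH[d].restrict (sphere 0 1)) := by
  have hmeas : Measurable (fun θ : E => x₀ + r • θ) := by fun_prop
  rw [← preimage_add_smul_sphere x₀ hr, ← Measure.restrict_map hmeas isClosed_sphere.measurableSet,
    map_add_smul_hausdorffMeasure hd x₀ hr.ne', Measure.restrict_smul, smul_smul,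
    ← NNReal.mul_rpow, mul_inv_cancel₀ (by simpa using hr.ne'), NNReal.one_rpow, one_smul]

lemma setIntegral_sphere_eq_smul {G : Type*} [NormedAddCommGroup G] [NormedSpace ℝ G]
    (hd : 0 ≤ d) (x₀ : E) (hr : 0 < r) (f : E → G) :
    ∫ y in sphere x₀ r, f y ∂μH[d] = r ^ d • ∫ θ in sphere 0 1, f (x₀ + r • θ) ∂μH[d] := by
  have he : MeasurableEmbedding (fun θ : E => x₀ + r • θ) :=
    ((Homeomorph.smulOfNeZero r hr.ne').trans (Homeomorph.addLeft x₀)).measurableEmbedding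
  rw [hausdorffMeasure_restrict_sphere hd x₀ hr, integral_smul_nnreal_measure, he.integral_map,
    NNReal.smul_def, NNReal.coe_rpow, coe_nnnorm, Real.norm_of_nonneg hr.le]

lemma hausdorffMeasure_sphere_ne_top (hd : 0 ≤ d) (x₀ : E) (hr : 0 < r)
    (h : μH[d] (sphere (0 : E) 1) ≠ ⊤) : μH[d] (sphere x₀ r) ≠ ⊤ := by
  have : IsFiniteMeasure (μH[d].restrict (sphere (0 : E) 1)) := isFiniteMeasure_restrict.2 h
  have : IsFiniteMeasure (μH[d].restrict (sphere x₀ r)) := by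
    rw [hausdorffMeasure_restrict_sphere hd x₀ hr]
    infer_instance
  exact isFiniteMeasure_restrict.1 this

end Scaling

section RayDerivative

variable {E F : Type*} [NormedAddCommGroup E] [NormedSpace ℝ E]
  [NormedAddCommGroup F] [InnerProductSpace ℝ F]

lemma hasDerivAt_norm_sq_comp_add_smul {u : E → F} {x₀ θ : E} {t : ℝ}
    (hu : DifferentiableAt ℝ u (x₀ + t • θ)) :
    HasDerivAt (fun t => ‖u (x₀ + t • θ)‖ ^ 2)
      (2 * inner ℝ (u (x₀ + t • θ)) (fderiv ℝ u (x₀ + t • θ) θ)) t := by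
  have hline : HasDerivAt (fun t : ℝ => x₀ + t • θ) θ t := by
    simpa using ((hasDerivAt_id t).smul_const θ).const_add x₀
  exact (hu.hasFDerivAt.comp_hasDerivAt t hline).norm_sq

lemma add_smul_mem_closedBall {x₀ θ : E} {t r R : ℝ} (hθ : θ ∈ sphere (0 : E) 1)
    (ht : t ∈ ball r (R - |r|)) : x₀ + t • θ ∈ closedBall x₀ R := by
  have := abs_sub_abs_le_abs_sub t r
  rw [mem_ball, Real.dist_eq] at ht
  simpa [norm_smul, mem_sphere_zero_iff_norm.mp hθ] using (by linarith : |t| ≤ R)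

variable [ProperSpace E] [MeasurableSpace E] [BorelSpace E]

lemma hasDerivAt_setIntegral_norm_sq_comp_add_smul {μ : Measure E} (hμ : μ (sphere 0 1) ≠ ⊤)
    {u : E → F} {V : Set E} (hV : IsOpen V) (hu : ContDiffOn ℝ 1 u V) {x₀ : E} {R r : ℝ}
    (hVR : closedBall x₀ R ⊆ V) (hr : |r| < R) :
    HasDerivAt (fun t => ∫ θ in sphere 0 1, ‖u (x₀ + t • θ)‖ ^ 2 ∂μ)
      (∫ θ in sphere 0 1, 2 * inner ℝ (u (x₀ + r • θ)) (fderiv ℝ u (x₀ + r • θ) θ) ∂μ) r := by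
  have : IsFiniteMeasure (μ.restrict (sphere 0 1)) := isFiniteMeasure_restrict.2 hμ
  have hS : MeasurableSet (sphere (0 : E) 1) := isClosed_sphere.measurableSet
  have hDu : ContinuousOn (fderiv ℝ u) V := hu.continuousOn_fderiv_of_isOpen hV le_rfl
  obtain ⟨C₀, hC₀⟩ := (isCompact_closedBall x₀ R).exists_bound_of_continuousOn
    (hu.continuousOn.mono hVR)
  obtain ⟨C₁, hC₁⟩ := (isCompact_closedBall x₀ R).exists_bound_of_continuousOn (hDu.mono hVR)
  have hε : 0 < R - |r| := sub_pos.2 hr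
  have hray : ∀ t : ℝ, Continuous fun θ : E => x₀ + t • θ := fun t => by fun_prop
  have hcont : ∀ t ∈ ball r (R - |r|), ContinuousOn (fun θ => u (x₀ + t • θ)) (sphere 0 1) :=
    fun t ht => hu.continuousOn.comp (hray t).continuousOn fun θ hθ =>
      hVR (add_smul_mem_closedBall hθ ht)
  have hcont' : ∀ t ∈ ball r (R - |r|),
      ContinuousOn (fun θ => fderiv ℝ u (x₀ + t • θ) θ) (sphere 0 1) :=
    fun t ht => (hDu.comp (hray t).continuousOn fun θ hθ =>
      hVR (add_smul_mem_closedBall hθ ht)).clm_apply continuousOn_id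
  have hr_mem : r ∈ ball r (R - |r|) := mem_ball_self hε
  refine (hasDerivAt_integral_of_dominated_loc_of_deriv_le
    (F := fun t θ => ‖u (x₀ + t • θ)‖ ^ 2)
    (F' := fun t θ => 2 * inner ℝ (u (x₀ + t • θ)) (fderiv ℝ u (x₀ + t • θ) θ))
    (bound := fun _ => 2 * (C₀ * C₁))
    (ball_mem_nhds r hε) ?_ ?_ ?_ ?_ (integrable_const (μ := μ.restrict (sphere 0 1)) _) ?_).2
  · filter_upwards [ball_mem_nhds r hε] with t ht
    exact ((hcont t ht).norm.pow 2).aestronglyMeasurable hS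
  · exact ((hcont r hr_mem).norm.pow 2).integrableOn_of_subset_isCompact (isCompact_sphere 0 1)
      hS le_rfl hμ
  · exact (continuousOn_const.mul ((hcont r hr_mem).inner (hcont' r hr_mem))).aestronglyMeasurable
      hS
  · filter_upwards [ae_restrict_mem hS] with θ hθ t ht
    have hy := add_smul_mem_closedBall (x₀ := x₀) hθ ht
    have hDuθ : ‖fderiv ℝ u (x₀ + t • θ) θ‖ ≤ C₁ := by
      simpa [mem_sphere_zero_iff_norm.mp hθ] using
        (fderiv ℝ u (x₀ + t • θ)).le_of_opNorm_le (hC₁ _ hy) θ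
    rw [norm_mul, Real.norm_two]
    gcongr
    exact (norm_inner_le_norm _ _).trans
      (mul_le_mul (hC₀ _ hy) hDuθ (norm_nonneg _) ((norm_nonneg _).trans (hC₀ _ hy)))
  · filter_upwards [ae_restrict_mem hS] with θ hθ t ht
    have hy := hV.mem_nhds (hVR (add_smul_mem_closedBall hθ ht))
    exact hasDerivAt_norm_sq_comp_add_smul ((hu.contDiffAt hy).differentiableAt one_ne_zero)

end RayDerivative

lemma hasDerivAt_weiss {D H : ℝ → ℝ} {r α K : ℝ} (hr : 0 < r)
    (hD : HasDerivAt D (D r / r + 2 * K) r) (hH : HasDerivAt H (2 * H r / r + 2 * D r) r) :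
    HasDerivAt (fun t => t ^ (-(1 + 2 * α)) * D t - α * t ^ (-(2 + 2 * α)) * H t)
      (2 / r ^ (3 + 2 * α) * (r ^ 2 * K - 2 * α * r * D r + α ^ 2 * H r)) r := by
  have hp : ∀ a : ℝ, HasDerivAt (fun t : ℝ => t ^ a) (a * r ^ (a - 1)) r :=
    fun a => Real.hasDerivAt_rpow_const (Or.inl hr.ne')
  refine (((hp _).mul hD).sub (((hp _).const_mul α).mul hH)).congr_deriv ?_
  have hpow : ∀ k : ℝ, r ^ (k - (3 + 2 * α)) = r ^ k / r ^ (3 + 2 * α) := fun k =>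
    Real.rpow_sub hr _ _
  rw [show -(1 + 2 * α) = 2 - (3 + 2 * α) by ring, show -(2 + 2 * α) = 1 - (3 + 2 * α) by ring,
    show 2 - (3 + 2 * α) - 1 = 1 - (3 + 2 * α) by ring,
    show 1 - (3 + 2 * α) - 1 = 0 - (3 + 2 * α) by ring, hpow, hpow, hpow, Real.rpow_zero,
    Real.rpow_one, Real.rpow_two]
  field_simp
  ring

lemma norm_sub_smul_nu {x y : E3} (h : y ≠ x) : ‖y - x‖ • nu x y = y - x := by
  rw [nu, smul_smul, mul_inv_cancel₀ (norm_ne_zero_iff.2 (sub_ne_zero.2 h)), one_smul]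

lemma continuousAt_nu {x y : E3} (h : y ≠ x) : ContinuousAt (nu x) y := by
  unfold nu
  fun_prop (disch := simpa [sub_eq_zero] using h)

lemma nu_add_smul {x θ : E3} {r : ℝ} (hr : 0 < r) (hθ : θ ∈ sphere (0 : E3) 1) :
    nu x (x + r • θ) = θ := by
  have hθ1 : ‖θ‖ = 1 := mem_sphere_zero_iff_norm.mp hθ
  rw [nu, add_sub_cancel_left, norm_smul, Real.norm_of_nonneg hr.le, hθ1, mul_one, smul_smul,
    inv_mul_cancel₀ hr.ne', one_smul]

section Sphere

variable {m : ℕ} {u : E3 → EuclideanSpace ℝ (Fin m)} {x₀ : E3} {r : ℝ}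

lemma setIntegral_sphere_eq_mul (hr : 0 < r) (f : E3 → ℝ) :
    ∫ y in sphere x₀ r, f y ∂μH[2] = r ^ 2 * ∫ θ in sphere 0 1, f (x₀ + r • θ) ∂μH[2] := by
  rw [setIntegral_sphere_eq_smul zero_le_two x₀ hr, smul_eq_mul, Real.rpow_two]

lemma integrableOn_sphere {f : E3 → ℝ} (hr : 0 < r) (hf : ContinuousOn f (sphere x₀ r)) :
    IntegrableOn f (sphere x₀ r) μH[2] :=
  hf.integrableOn_of_subset_isCompact (isCompact_sphere x₀ r) isClosed_sphere.measurableSet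
    le_rfl (hausdorffMeasure_sphere_ne_top zero_le_two x₀ hr hausdorffMeasure_unitSphere_lt_top.ne)

lemma hasDerivAt_sphHeight {V : Set E3} {R : ℝ} (hV : IsOpen V) (hu : ContDiffOn ℝ 1 u V)
    (hVR : closedBall x₀ R ⊆ V) (hr : 0 < r) (hrR : r < R) :
    HasDerivAt (sphHeight u x₀)
      (2 * sphHeight u x₀ r / r +
        2 * ∫ y in sphere x₀ r, inner ℝ (fderiv ℝ u y (nu x₀ y)) (u y) ∂μH[2]) r := by
  have hH : sphHeight u x₀ =ᶠ[𝓝 r]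
      fun t => t ^ 2 * ∫ θ in sphere 0 1, ‖u (x₀ + t • θ)‖ ^ 2 ∂μH[2] := by
    filter_upwards [lt_mem_nhds hr] with t ht
    exact setIntegral_sphere_eq_mul ht _
  have hF := hasDerivAt_setIntegral_norm_sq_comp_add_smul hausdorffMeasure_unitSphere_lt_top.ne
    hV hu hVR (by rwa [abs_of_pos hr])
  have hI : ∫ y in sphere x₀ r, inner ℝ (fderiv ℝ u y (nu x₀ y)) (u y) ∂μH[2] =
      r ^ 2 * ∫ θ in sphere 0 1, inner ℝ (u (x₀ + r • θ)) (fderiv ℝ u (x₀ + r • θ) θ) ∂μH[2] := by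
    rw [setIntegral_sphere_eq_mul hr]
    congr 1
    refine setIntegral_congr_fun isClosed_sphere.measurableSet fun θ hθ => ?_
    rw [nu_add_smul hr hθ, real_inner_comm]
  refine (((hasDerivAt_pow 2 r).mul hF).congr_of_eventuallyEq hH).congr_deriv ?_
  rw [hI, integral_const_mul, sphHeight, setIntegral_sphere_eq_mul hr]
  field_simp
  ring

lemma setIntegral_sphere_norm_sq_fderiv_sub_smul (hr : 0 < r)
    (hu : ContinuousOn u (sphere x₀ r)) (hDu : ContinuousOn (fderiv ℝ u) (sphere x₀ r)) (α : ℝ) :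
    ∫ y in sphere x₀ r, ‖fderiv ℝ u y (y - x₀) - α • u y‖ ^ 2 ∂μH[2] =
      r ^ 2 * (∫ y in sphere x₀ r, ‖fderiv ℝ u y (nu x₀ y)‖ ^ 2 ∂μH[2])
        - 2 * α * r * (∫ y in sphere x₀ r, inner ℝ (fderiv ℝ u y (nu x₀ y)) (u y) ∂μH[2])
        + α ^ 2 * sphHeight u x₀ r := by
  have hS : MeasurableSet (sphere x₀ r) := isClosed_sphere.measurableSet
  have hν : ContinuousOn (nu x₀) (sphere x₀ r) := fun y hy =>
    (continuousAt_nu (ne_of_mem_sphere hy hr.ne')).continuousWithinAt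
  have hDuν : ContinuousOn (fun y => fderiv ℝ u y (nu x₀ y)) (sphere x₀ r) := hDu.clm_apply hν
  have hint₀ : IntegrableOn (fun y => ‖u y‖ ^ 2) (sphere x₀ r) μH[2] :=
    integrableOn_sphere hr (hu.norm.pow 2)
  have hint₁ : IntegrableOn (fun y => inner ℝ (fderiv ℝ u y (nu x₀ y)) (u y)) (sphere x₀ r) μH[2] :=
    integrableOn_sphere hr (hDuν.inner hu)
  have hint₂ : IntegrableOn (fun y => ‖fderiv ℝ u y (nu x₀ y)‖ ^ 2) (sphere x₀ r) μH[2] :=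
    integrableOn_sphere hr (hDuν.norm.pow 2)
  have hint₂₁ : IntegrableOn (fun y => r ^ 2 * ‖fderiv ℝ u y (nu x₀ y)‖ ^ 2
      - 2 * α * r * inner ℝ (fderiv ℝ u y (nu x₀ y)) (u y)) (sphere x₀ r) μH[2] :=
    (hint₂.const_mul _).sub (hint₁.const_mul _)
  have hexpand : ∀ y ∈ sphere x₀ r, ‖fderiv ℝ u y (y - x₀) - α • u y‖ ^ 2 =
      r ^ 2 * ‖fderiv ℝ u y (nu x₀ y)‖ ^ 2
        - 2 * α * r * inner ℝ (fderiv ℝ u y (nu x₀ y)) (u y) + α ^ 2 * ‖u y‖ ^ 2 := by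
    intro y hy
    rw [← norm_sub_smul_nu (ne_of_mem_sphere hy hr.ne'), mem_sphere_iff_norm.mp hy, map_smul,
      norm_sub_sq_real, norm_smul, norm_smul, real_inner_smul_left, real_inner_smul_right,
      mul_pow, mul_pow, Real.norm_eq_abs, Real.norm_eq_abs, sq_abs, sq_abs]
    ring
  rw [setIntegral_congr_fun hS hexpand,
    integral_add hint₂₁ (hint₀.const_mul _),
    integral_sub (hint₂.const_mul _) (hint₁.const_mul _), integral_const_mul, integral_const_mul,
    integral_const_mul, sphHeight]

end Sphere

theorem stmt_17_general {m : ℕ} (x₀ : E3) (R : ℝ) (α : ℝ)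
    (u : E3 → EuclideanSpace ℝ (Fin m))
    (hu : ∃ V : Set E3, IsOpen V ∧ closedBall x₀ R ⊆ V ∧ ContDiffOn ℝ 1 u V)
    (D H W : ℝ → ℝ)
    (hH : ∀ r : ℝ, H r = sphHeight u x₀ r)
    (hW : ∀ r : ℝ, W r = r ^ (-(1 + 2 * α)) * D r - α * r ^ (-(2 + 2 * α)) * H r)
    (hDrep : ∀ r ∈ Set.Ioo (0 : ℝ) R,
      D r = ∫ y in sphere x₀ r, (inner ℝ (fderiv ℝ u y (nu x₀ y)) (u y) : ℝ) ∂(μH[2]))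
    (hDderiv : ∀ r ∈ Set.Ioo (0 : ℝ) R,
      HasDerivAt D
        (D r / r + 2 * ∫ y in sphere x₀ r, ‖fderiv ℝ u y (nu x₀ y)‖ ^ 2 ∂(μH[2])) r) :
    ∀ r ∈ Set.Ioo (0 : ℝ) R,
      HasDerivAt W
        ((2 / r ^ (3 + 2 * α)) *
          ∫ y in sphere x₀ r, ‖fderiv ℝ u y (y - x₀) - α • u y‖ ^ 2 ∂(μH[2])) r := by
  rintro r hr
  obtain ⟨V, hV, hVR, hu⟩ := hu
  have hrV : sphere x₀ r ⊆ V := sphere_subset_closedBall.trans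
    ((closedBall_subset_closedBall hr.2.le).trans hVR)
  have hH' : HasDerivAt H (2 * H r / r + 2 * D r) r := by
    rw [funext hH, hDrep r hr]
    exact hasDerivAt_sphHeight hV hu hVR hr.1 hr.2
  rw [funext hW, setIntegral_sphere_norm_sq_fderiv_sub_smul hr.1 (hu.continuousOn.mono hrV)
    ((hu.continuousOn_fderiv_of_isOpen hV le_rfl).mono hrV), ← hDrep r hr, ← hH r]
  exact hasDerivAt_weiss hr.1 (hDderiv r hr) hH'

/-- the classical Weiss monotonicity formula. -/
theorem stmt_17 {m : ℕ} (hm : 1 ≤ m) (x₀ : E3) (R : ℝ) (hR : 0 < R) (α : ℝ)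
    (u : E3 → EuclideanSpace ℝ (Fin m))
    (hu : ∃ V : Set E3, IsOpen V ∧ closedBall x₀ R ⊆ V ∧ ContDiffOn ℝ 1 u V)
    (D H W : ℝ → ℝ)
    (hD : ∀ r : ℝ, D r = ∫ y in ball x₀ r, gradSq u y)
    (hH : ∀ r : ℝ, H r = sphHeight u x₀ r)
    (hW : ∀ r : ℝ, W r = r ^ (-(1 + 2 * α)) * D r - α * r ^ (-(2 + 2 * α)) * H r)
    (hDrep : ∀ r ∈ Set.Ioo (0 : ℝ) R,
      D r = ∫ y in sphere x₀ r, (inner ℝ (fderiv ℝ u y (nu x₀ y)) (u y) : ℝ) ∂(μH[2]))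
    (hDderiv : ∀ r ∈ Set.Ioo (0 : ℝ) R,
      HasDerivAt D
        (D r / r + 2 * ∫ y in sphere x₀ r, ‖fderiv ℝ u y (nu x₀ y)‖ ^ 2 ∂(μH[2])) r) :
    ∀ r ∈ Set.Ioo (0 : ℝ) R,
      HasDerivAt W
        ((2 / r ^ (3 + 2 * α)) *
          ∫ y in sphere x₀ r, ‖fderiv ℝ u y (y - x₀) - α • u y‖ ^ 2 ∂(μH[2])) r :=
  stmt_17_general x₀ R α u hu D H W hH hW hDrep hDderiv
end
end

section
/- Let m ≥ 1 and let u : ℝ³ → ℝ^m be a continuous map that is not identically zero. Let x₁ ≠ x₂ be points of ℝ³ and let α₁, α₂ > 0 be such that u(x_i + λ(x − x_i)) = λ^{α_i} u(x) for every x ∈ ℝ³, every λ > 0, and i = 1, 2 (i.e., u is homogeneous of degree α_i about x_i). Then α₁ = α₂, and u is invariant under translations in the direction x₂ − x₁, i.e., u(x + t(x₂ − x₁)) = u(x) for every x ∈ ℝ³ and every t ∈ ℝ. -/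
/-!
Homogeneity about `p` and about `q` combine into a translation rule: blowing up by `λ` about `p`
and shrinking back by `λ⁻¹` about `q` is a translation along `q - p`, so
`u (x + t • (q - p)) = (1 - t) ^ (β - α) • u x` for `t < 1`. Translating by `1/4` twice or by
`1/2` once must give the same factor, `(3/4) ^ (2c) = (1/2) ^ c` with `c = β - α`, which forces
`c = 0` as soon as `u` does not vanish; the translation rule then says that `u` is invariant
along `q - p`.
-/

open MeasureTheory Metric

noncomputable section

open Real

section

variable {V W : Type*} [AddCommGroup V] [Module ℝ V] [AddCommGroup W] [Module ℝ W]

def IsHomogeneousAbout (u : V → W) (p : V) (α : ℝ) : Prop :=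
  ∀ (x : V) (lam : ℝ), 0 < lam → u (p + lam • (x - p)) = lam ^ α • u x

namespace IsHomogeneousAbout

variable {u : V → W} {p q : V} {α β : ℝ}

theorem map_add_smul_sub_of_lt_one (hp : IsHomogeneousAbout u p α)
    (hq : IsHomogeneousAbout u q β) (x : V) {t : ℝ} (ht : t < 1) :
    u (x + t • (q - p)) = (1 - t) ^ (β - α) • u x := by
  have hpos : 0 < 1 - t := sub_pos.mpr ht
  have hpt : q + (1 - t) • (p + (1 - t)⁻¹ • (x - p) - q) = x + t • (q - p) := by
    match_scalars <;> field_simp <;> ring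
  rw [← hpt, hq _ _ hpos, hp _ _ (inv_pos.mpr hpos), smul_smul, inv_rpow hpos.le,
    ← rpow_neg hpos.le, ← rpow_add hpos, ← sub_eq_add_neg]

theorem degree_eq (hp : IsHomogeneousAbout u p α) (hq : IsHomogeneousAbout u q β)
    (hu : ∃ x, u x ≠ 0) : α = β := by
  obtain ⟨x, hx⟩ := hu
  have translate := hp.map_add_smul_sub_of_lt_one hq
  have twice : u (x + (1 / 4 : ℝ) • (q - p) + (1 / 4 : ℝ) • (q - p))
      = u (x + (1 / 2 : ℝ) • (q - p)) := by
    congr 1; match_scalars <;> norm_num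
  rw [translate _ (by norm_num), translate _ (by norm_num), translate _ (by norm_num),
    smul_smul, ← mul_rpow (by norm_num) (by norm_num)] at twice
  have hpow : (9 / 16 : ℝ) ^ (β - α) = (1 / 2 : ℝ) ^ (β - α) := by
    convert smul_left_injective ℝ hx twice using 2 <;> norm_num
  by_contra hne
  have := rpow_left_injOn (sub_ne_zero.mpr (Ne.symm hne)) (by norm_num) (by norm_num) hpow
  norm_num at this

theorem map_add_smul_sub (hp : IsHomogeneousAbout u p α) (hq : IsHomogeneousAbout u q α)
    (x : V) (t : ℝ) : u (x + t • (q - p)) = u x := by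
  have translate (y : V) {s : ℝ} (hs : s < 1) : u (y + s • (q - p)) = u y := by
    rw [hp.map_add_smul_sub_of_lt_one hq y hs, sub_self, rpow_zero, one_smul]
  rcases lt_or_ge t 1 with ht | ht
  · exact translate x ht
  · have back := translate (x + t • (q - p)) (s := -t) (by linarith)
    rwa [add_assoc, ← add_smul, add_neg_cancel, zero_smul, add_zero, eq_comm] at back

end IsHomogeneousAbout

end

theorem stmt_18_general {m : ℕ} (u : E3 → EuclideanSpace ℝ (Fin m))
    (hnontriv : ∃ x, u x ≠ 0)
    (x₁ x₂ : E3) (α₁ α₂ : ℝ)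
    (h1 : ∀ (x : E3) (lam : ℝ), 0 < lam →
      u (x₁ + lam • (x - x₁)) = (lam ^ α₁) • u x)
    (h2 : ∀ (x : E3) (lam : ℝ), 0 < lam →
      u (x₂ + lam • (x - x₂)) = (lam ^ α₂) • u x) :
    α₁ = α₂ ∧ ∀ (x : E3) (t : ℝ), u (x + t • (x₂ - x₁)) = u x := by
  have hα : α₁ = α₂ := IsHomogeneousAbout.degree_eq h1 h2 hnontriv
  subst hα
  exact ⟨rfl, IsHomogeneousAbout.map_add_smul_sub h1 h2⟩

/-- a nontrivial continuous map homogeneous about two distinct points has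
equal homogeneity degrees and is invariant in the direction joining the two points. -/
theorem stmt_18 {m : ℕ} (hm : 1 ≤ m) (u : E3 → EuclideanSpace ℝ (Fin m))
    (hcont : Continuous u) (hnontriv : ∃ x, u x ≠ 0)
    (x₁ x₂ : E3) (hne : x₁ ≠ x₂) (α₁ α₂ : ℝ) (hα₁ : 0 < α₁) (hα₂ : 0 < α₂)
    (h1 : ∀ (x : E3) (lam : ℝ), 0 < lam →
      u (x₁ + lam • (x - x₁)) = (lam ^ α₁) • u x)
    (h2 : ∀ (x : E3) (lam : ℝ), 0 < lam →
      u (x₂ + lam • (x - x₂)) = (lam ^ α₂) • u x) :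
    α₁ = α₂ ∧ ∀ (x : E3) (t : ℝ), u (x + t • (x₂ - x₁)) = u x :=
  stmt_18_general u hnontriv x₁ x₂ α₁ α₂ h1 h2
end
end
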